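/- Let $(\Omega,\mathcal F,\mathbb P)$ be a probability space and let $Y:[0,\infty)\times\Omega\to\mathbb N$ be a unit-intensity Poisson counting process, i.e. $Y(0)=0$ almost surely, every sample path is nondecreasing and right-continuous, and for every finite sequence $0=t_0\le t_1\le\dots\le t_k$ the increments $Y(t_1)-Y(t_0),\dots,Y(t_k)-Y(t_{k-1})$ are independent and $Y(t_i)-Y(t_{i-1})$ has the Poisson distribution with mean $t_i-t_{i-1}$. Fix an integer $n\ge 1$ and $T>0$, and set $w(t)=Y(nt)-nt$. Then for every real $x$ with $0\le x\le 2\sqrt n\, T$, $\mathbb P\big(\sup_{t\in[0,T]}|w(t)|\ge x\sqrt n\big)\le 2\exp\big(-x^2/(4T)\big)$. -/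

import Mathlib

open MeasureTheory ProbabilityTheory Real
open scoped NNReal ENNReal

/-!
On a grid `0 = v₀ ≤ … ≤ v_k`, the compensated walk `S_i = r (Y(v_i) - Y(0) - v_i)` has independent
steps whose exponential moments `exp ((v_{j+1} - v_j) (eʳ - 1 - r))` are at least `1`, so
`exp S_i` is a submartingale and the first-passage decomposition (Doob's maximal inequality) gives
`P(max_{i ≤ k} S_i ≥ b) ≤ exp (v_k (eʳ - 1 - r) - b) ≤ exp (v_k r² - b)` for `|r| ≤ 1`. Taking
`r = ±x / (2√n T)`, `b = |r| x √n` and `v_k = nT` makes the right-hand side `exp (-x² / (4T))`.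
By right-continuity, if the supremum over `[0, T]` exceeds `y √n` then so does `|w|` at some
dyadic time; these grid events increase as the grid is refined, and letting `y ↑ x` concludes.
-/

open Finset

section RandomWalk

variable {Ω : Type*} {mΩ : MeasurableSpace Ω} {P : Measure Ω} {k : ℕ} {ξ : ℕ → Ω → ℝ}

abbrev stepsMeasurableSpace (k : ℕ) (ξ : ℕ → Ω → ℝ) (p : ℕ → Prop) : MeasurableSpace Ω :=
  ⨆ (j : Fin k) (_ : p j), MeasurableSpace.comap (ξ j) inferInstance

theorem stepsMeasurableSpace_le (hξ : ∀ j, Measurable (ξ j)) (p : ℕ → Prop) :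
    stepsMeasurableSpace k ξ p ≤ mΩ :=
  iSup₂_le fun j _ => (hξ j).comap_le

theorem measurable_sum_stepsMeasurableSpace {p : ℕ → Prop} {s : Finset ℕ}
    (hs : ∀ j ∈ s, j < k ∧ p j) :
    Measurable[stepsMeasurableSpace k ξ p] fun ω => ∑ j ∈ s, ξ j ω :=
  Finset.measurable_sum _ fun j hj => (comap_measurable (ξ j)).mono
    (le_iSup₂ (f := fun (l : Fin k) (_ : p l) => MeasurableSpace.comap (ξ l) inferInstance)
      ⟨j, (hs j hj).1⟩ (hs j hj).2) le_rfl

theorem indep_stepsMeasurableSpace_lt_ge (hξ : ∀ j, Measurable (ξ j))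
    (hind : iIndepFun (fun j : Fin k => ξ j) P) (i : ℕ) :
    Indep (stepsMeasurableSpace k ξ (· < i)) (stepsMeasurableSpace k ξ (i ≤ ·)) P :=
  indep_iSup_of_disjoint (m := fun j : Fin k => MeasurableSpace.comap (ξ j) inferInstance)
    (S := {j | (j : ℕ) < i}) (T := {j | i ≤ (j : ℕ)}) (fun j => (hξ j).comap_le)
    ((iIndepFun_iff_iIndep _ (fun j : Fin k => ξ j) _).1 hind)
    (Set.disjoint_left.2 fun j (h1 : (j : ℕ) < i) (h2 : i ≤ (j : ℕ)) => by omega)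

theorem one_le_lintegral_exp_sum_Ico (hξ : ∀ j, Measurable (ξ j))
    (hind : iIndepFun (fun j : Fin k => ξ j) P)
    (hmgf : ∀ j < k, 1 ≤ ∫⁻ ω, ENNReal.ofReal (exp (ξ j ω)) ∂P) (i : ℕ) :
    1 ≤ ∫⁻ ω, ENNReal.ofReal (exp (∑ j ∈ Ico i k, ξ j ω)) ∂P := by
  have hIco : (univ.filter fun j : Fin k => i ≤ (j : ℕ)).map Fin.valEmbedding = Ico i k := by
    ext j
    simp only [mem_map, mem_filter, mem_univ, true_and, Fin.valEmbedding_apply, mem_Ico]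
    exact ⟨by rintro ⟨j, hj, rfl⟩; exact ⟨hj, j.isLt⟩, fun h => ⟨⟨j, h.2⟩, h.1, rfl⟩⟩
  have hprod : ∀ ω, ENNReal.ofReal (exp (∑ j ∈ Ico i k, ξ j ω))
      = ∏ j ∈ univ.filter (fun j : Fin k => i ≤ (j : ℕ)), ENNReal.ofReal (exp (ξ j ω)) := by
    intro ω
    rw [exp_sum, ENNReal.ofReal_prod_of_nonneg fun _ _ => (exp_pos _).le, ← hIco, prod_map]
    rfl
  simp_rw [hprod]
  rw [lintegral_prod_eq_prod_lintegral_of_indepFun _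
    (fun (j : Fin k) ω => ENNReal.ofReal (exp (ξ j ω)))
    (hind.comp (fun _ x => ENNReal.ofReal (exp x)) fun _ => by fun_prop) fun j => by fun_prop]
  exact one_le_prod' fun j _ => hmgf j j.isLt

theorem measure_le_exp_neg_mul_setLIntegral_exp_sum (hξ : ∀ j, Measurable (ξ j))
    (hind : iIndepFun (fun j : Fin k => ξ j) P)
    (hmgf : ∀ j < k, 1 ≤ ∫⁻ ω, ENNReal.ofReal (exp (ξ j ω)) ∂P) {i : ℕ} (hik : i ≤ k)
    {A : Set Ω} (hA : MeasurableSet[stepsMeasurableSpace k ξ (· < i)] A)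
    {b : ℝ} (hAb : ∀ ω ∈ A, b ≤ ∑ j ∈ range i, ξ j ω) :
    P A ≤ ENNReal.ofReal (exp (-b)) *
      ∫⁻ ω in A, ENNReal.ofReal (exp (∑ j ∈ range k, ξ j ω)) ∂P := by
  have hFle := stepsMeasurableSpace_le (k := k) hξ (· < i)
  have hpast : Measurable[stepsMeasurableSpace k ξ (· < i)]
      fun ω => ENNReal.ofReal (exp (∑ j ∈ range i, ξ j ω)) :=
    ENNReal.measurable_ofReal.comp <| measurable_exp.comp <|
      measurable_sum_stepsMeasurableSpace fun j hj => by rw [mem_range] at hj; omega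
  have hfuture : Measurable[stepsMeasurableSpace k ξ (i ≤ ·)]
      fun ω => ENNReal.ofReal (exp (∑ j ∈ Ico i k, ξ j ω)) :=
    ENNReal.measurable_ofReal.comp <| measurable_exp.comp <|
      measurable_sum_stepsMeasurableSpace fun j hj => by rw [mem_Ico] at hj; omega
  have hsplit : ∀ ω, A.indicator (fun ω => ENNReal.ofReal (exp (∑ j ∈ range i, ξ j ω))) ω *
      ENNReal.ofReal (exp (∑ j ∈ Ico i k, ξ j ω))
      = A.indicator (fun ω => ENNReal.ofReal (exp (∑ j ∈ range k, ξ j ω))) ω := by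
    intro ω
    by_cases hω : ω ∈ A
    · simp only [Set.indicator_of_mem hω]
      rw [← ENNReal.ofReal_mul (exp_pos _).le, ← exp_add, sum_range_add_sum_Ico _ hik]
    · simp only [Set.indicator_of_notMem hω, zero_mul]
  calc P A = ∫⁻ _ in A, 1 ∂P := (setLIntegral_one A).symm
    _ ≤ ∫⁻ ω in A, ENNReal.ofReal (exp (-b)) * ENNReal.ofReal (exp (∑ j ∈ range i, ξ j ω)) ∂P := by
        refine setLIntegral_mono' (hFle _ hA) fun ω hω => ?_
        rw [← ENNReal.ofReal_mul (exp_pos _).le, ← exp_add, ENNReal.one_le_ofReal, one_le_exp_iff]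
        linarith [hAb ω hω]
    _ = ENNReal.ofReal (exp (-b)) * ∫⁻ ω in A, ENNReal.ofReal (exp (∑ j ∈ range i, ξ j ω)) ∂P :=
        lintegral_const_mul _ (hpast.mono hFle le_rfl)
    _ ≤ ENNReal.ofReal (exp (-b)) * ((∫⁻ ω in A, ENNReal.ofReal (exp (∑ j ∈ range i, ξ j ω)) ∂P) *
          ∫⁻ ω, ENNReal.ofReal (exp (∑ j ∈ Ico i k, ξ j ω)) ∂P) := by
        gcongr
        exact le_mul_of_one_le_right' (one_le_lintegral_exp_sum_Ico hξ hind hmgf i)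
    _ = ENNReal.ofReal (exp (-b)) * ∫⁻ ω in A, ENNReal.ofReal (exp (∑ j ∈ range k, ξ j ω)) ∂P := by
        rw [← lintegral_indicator (hFle _ hA), ← lintegral_indicator (hFle _ hA),
          ← lintegral_mul_eq_lintegral_mul_lintegral_of_independent_measurableSpace hFle
            (stepsMeasurableSpace_le hξ _) (indep_stepsMeasurableSpace_lt_ge hξ hind i)
            (hpast.indicator hA) hfuture]
        simp_rw [hsplit]

theorem measure_exists_le_sum_range_le (hξ : ∀ j, Measurable (ξ j))
    (hind : iIndepFun (fun j : Fin k => ξ j) P)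
    (hmgf : ∀ j < k, 1 ≤ ∫⁻ ω, ENNReal.ofReal (exp (ξ j ω)) ∂P) (b : ℝ) :
    P {ω | ∃ i ≤ k, b ≤ ∑ j ∈ range i, ξ j ω} ≤
      ENNReal.ofReal (exp (-b)) * ∫⁻ ω, ENNReal.ofReal (exp (∑ j ∈ range k, ξ j ω)) ∂P := by
  set S : ℕ → Ω → ℝ := fun i ω => ∑ j ∈ range i, ξ j ω
  set firstPassage : ℕ → Set Ω := fun i => {ω | b ≤ S i ω ∧ ∀ j < i, S j ω < b}
  have hpast : ∀ i ≤ k, MeasurableSet[stepsMeasurableSpace k ξ (· < i)] (firstPassage i) := by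
    intro i hik
    have hS : ∀ j ≤ i, Measurable[stepsMeasurableSpace k ξ (· < i)] (S j) := fun j hj =>
      measurable_sum_stepsMeasurableSpace fun l hl => by rw [mem_range] at hl; omega
    simp only [firstPassage, Set.ofPred_and, Set.ofPred_forall]
    exact (measurableSet_le measurable_const (hS i le_rfl)).inter
      (.iInter fun j => .iInter fun hj => measurableSet_lt (hS j hj.le) measurable_const)
  have hunion : {ω | ∃ i ≤ k, b ≤ S i ω} = ⋃ i ∈ range (k + 1), firstPassage i := by
    ext ω
    simp only [Set.mem_ofPred_eq, Set.mem_iUnion, mem_range, Nat.lt_succ_iff, firstPassage]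
    constructor
    · rintro ⟨i, hik, hi⟩
      have hex : ∃ i, b ≤ S i ω := ⟨i, hi⟩
      exact ⟨Nat.find hex, (Nat.find_min' hex hi).trans hik, Nat.find_spec hex,
        fun j hj => not_le.1 (Nat.find_min hex hj)⟩
    · rintro ⟨i, hik, hi, -⟩
      exact ⟨i, hik, hi⟩
  have hdisj : (range (k + 1) : Set ℕ).PairwiseDisjoint firstPassage := by
    intro i _ j _ hij
    refine Set.disjoint_left.2 fun ω hωi hωj => ?_
    rcases hij.lt_or_gt with h | h
    · exact (hωj.2 i h).not_ge hωi.1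
    · exact (hωi.2 j h).not_ge hωj.1
  have hmeas : ∀ i ∈ range (k + 1), MeasurableSet (firstPassage i) := fun i hi =>
    stepsMeasurableSpace_le hξ _ _ (hpast i (Nat.lt_succ_iff.1 (mem_range.1 hi)))
  calc P {ω | ∃ i ≤ k, b ≤ S i ω} = ∑ i ∈ range (k + 1), P (firstPassage i) := by
        rw [hunion, measure_biUnion_finset hdisj hmeas]
    _ ≤ ∑ i ∈ range (k + 1), ENNReal.ofReal (exp (-b)) *
          ∫⁻ ω in firstPassage i, ENNReal.ofReal (exp (S k ω)) ∂P :=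
        sum_le_sum fun i hi => measure_le_exp_neg_mul_setLIntegral_exp_sum hξ hind hmgf
          (Nat.lt_succ_iff.1 (mem_range.1 hi)) (hpast i (Nat.lt_succ_iff.1 (mem_range.1 hi)))
          fun ω hω => hω.1
    _ = ENNReal.ofReal (exp (-b)) *
          ∫⁻ ω in ⋃ i ∈ range (k + 1), firstPassage i, ENNReal.ofReal (exp (S k ω)) ∂P := by
        rw [← mul_sum, lintegral_biUnion_finset hdisj hmeas]
    _ ≤ ENNReal.ofReal (exp (-b)) * ∫⁻ ω, ENNReal.ofReal (exp (S k ω)) ∂P :=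
        mul_le_mul_right (setLIntegral_le_lintegral _ _) _

end RandomWalk

theorem lintegral_exp_mul_poissonMeasure (lam : ℝ≥0) (r : ℝ) :
    ∫⁻ m, ENNReal.ofReal (exp (r * m)) ∂poissonMeasure lam
      = ENNReal.ofReal (exp (lam * (exp r - 1))) := by
  have hterm : ∀ m : ℕ, ENNReal.ofReal (exp (r * m)) * poissonMeasure lam {m}
      = ENNReal.ofReal (exp (-lam) * ((lam * exp r) ^ m / m.factorial)) := by
    intro m
    rw [poissonMeasure_singleton, ← ENNReal.ofReal_mul (exp_pos _).le, mul_pow,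
      ← exp_nat_mul]
    ring_nf
  rw [lintegral_countable']
  simp_rw [hterm]
  rw [← ENNReal.ofReal_tsum_of_nonneg (fun m => by positivity)
    ((summable_pow_div_factorial _).mul_left _), tsum_mul_left,
    (NormedSpace.expSeries_div_hasSum_exp (lam * exp r)).tsum_eq, ← exp_eq_exp_ℝ, ← exp_add]
  ring_nf

theorem lintegral_exp_mul_sub_of_map_eq_poissonMeasure {Ω : Type*} {mΩ : MeasurableSpace Ω}
    {P : Measure Ω} {N : Ω → ℕ} (hN : Measurable N) {lam : ℝ≥0}
    (hlaw : P.map N = poissonMeasure lam) (r : ℝ) :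
    ∫⁻ ω, ENNReal.ofReal (exp (r * (N ω - lam))) ∂P
      = ENNReal.ofReal (exp (lam * (exp r - 1 - r))) := by
  have hsplit : ∀ ω, ENNReal.ofReal (exp (r * (N ω - lam)))
      = ENNReal.ofReal (exp (-(r * lam))) * ENNReal.ofReal (exp (r * N ω)) := by
    intro ω
    rw [← ENNReal.ofReal_mul (exp_pos _).le, ← exp_add]
    ring_nf
  simp_rw [hsplit]
  rw [lintegral_const_mul _ (by fun_prop),
    ← lintegral_map (f := fun m : ℕ => ENNReal.ofReal (exp (r * m))) (by fun_prop) hN, hlaw,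
    lintegral_exp_mul_poissonMeasure, ← ENNReal.ofReal_mul (exp_pos _).le, ← exp_add]
  ring_nf

theorem exists_nat_mul_div_two_pow_mem_Ico {T t u : ℝ} (hT : 0 < T) (ht : 0 ≤ t) (htT : t ≤ T)
    (htu : t < u) : ∃ m j : ℕ, j ≤ 2 ^ m ∧ j * T / 2 ^ m ∈ Set.Ico t u := by
  obtain ⟨m, hm⟩ := exists_pow_lt_of_lt_one (div_pos (sub_pos.2 htu) hT) one_half_lt_one
  have h2m : (0 : ℝ) < 2 ^ m := by positivity
  have hmesh : T / 2 ^ m < u - t := by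
    rw [div_pow, one_pow, one_div, inv_lt_iff_one_lt_mul₀ h2m, div_mul_eq_mul_div,
      one_lt_div hT] at hm
    rw [div_lt_iff₀ h2m]
    linarith
  set z := t * 2 ^ m / T
  have hz : 0 ≤ z := by positivity
  have hzT : z * T / 2 ^ m = t := by simp only [z]; field_simp
  refine ⟨m, ⌈z⌉₊, ?_, ?_, ?_⟩
  · exact_mod_cast Nat.ceil_le.2 (by rw [div_le_iff₀ hT]; push_cast; nlinarith)
  · calc t = z * T / 2 ^ m := hzT.symm
      _ ≤ ⌈z⌉₊ * T / 2 ^ m := by gcongr; exact Nat.le_ceil z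
  · calc (⌈z⌉₊ : ℝ) * T / 2 ^ m < (z + 1) * T / 2 ^ m := by
          gcongr; exact Nat.ceil_lt_add_one hz
      _ = t + T / 2 ^ m := by rw [add_mul, add_div, hzT, one_mul]
      _ < u := by linarith

theorem exists_dyadic_lt_of_lt_iSup {f : ℝ → ℝ} {T c : ℝ} (hT : 0 < T)
    (hf : ∀ t ∈ Set.Icc 0 T, ContinuousWithinAt f (Set.Ici t) t)
    (hc : c < ⨆ t : Set.Icc (0 : ℝ) T, f t) : ∃ m j : ℕ, j ≤ 2 ^ m ∧ c < f (j * T / 2 ^ m) := by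
  obtain ⟨t, ht, hct⟩ : ∃ t ∈ Set.Icc 0 T, c < f t := by
    by_cases hbdd : BddAbove (Set.range fun t : Set.Icc (0 : ℝ) T => f t)
    · have : Nonempty (Set.Icc (0 : ℝ) T) := ⟨⟨0, le_rfl, hT.le⟩⟩
      obtain ⟨t, ht⟩ := exists_lt_of_lt_ciSup hc
      exact ⟨t, t.2, ht⟩
    · obtain ⟨_, ⟨t, rfl⟩, ht⟩ := not_bddAbove_iff.1 hbdd c
      exact ⟨t, t.2, ht⟩
  obtain ⟨u, htu, hu⟩ := mem_nhdsGE_iff_exists_Ico_subset.1 (hf t ht (Ioi_mem_nhds hct))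
  obtain ⟨m, j, hj, hmem⟩ := exists_nat_mul_div_two_pow_mem_Ico hT ht.1 ht.2 htu
  exact ⟨m, j, hj, hu hmem⟩

theorem ContinuousWithinAt.abs_natCast_comp_mul_sub {g : ℝ → ℕ} {a t : ℝ} (ha : 0 ≤ a)
    (hg : ContinuousWithinAt g (Set.Ici (a * t)) (a * t)) :
    ContinuousWithinAt (fun s => |(g (a * s) : ℝ) - a * s|) (Set.Ici t) t := by
  have hscale : ContinuousWithinAt (fun s => a * s) (Set.Ici t) t := by fun_prop
  have hgs := (hg.comp hscale fun s (hs : t ≤ s) => mul_le_mul_of_nonneg_left hs ha)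
  exact ((continuous_of_discreteTopology (f := ((↑) : ℕ → ℝ))).continuousAt.comp_continuousWithinAt
    hgs |>.sub hscale).abs

section CountingProcess

variable {Ω : Type*} {mΩ : MeasurableSpace Ω} {P : Measure Ω} {Y : ℝ → Ω → ℕ}

theorem lintegral_exp_mul_increment (hYmeas : ∀ t : ℝ, Measurable (Y t))
    (hYmono : ∀ ω : Ω, ∀ ⦃s t : ℝ⦄, 0 ≤ s → s ≤ t → Y s ω ≤ Y t ω)
    (hYpoisson : ∀ (s t : ℝ), 0 ≤ s → s ≤ t →
      P.map (fun ω => Y t ω - Y s ω) = poissonMeasure (t - s).toNNReal)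
    {s t : ℝ} (hs : 0 ≤ s) (hst : s ≤ t) (r : ℝ) :
    ∫⁻ ω, ENNReal.ofReal (exp (r * ((Y t ω : ℝ) - Y s ω - (t - s)))) ∂P
      = ENNReal.ofReal (exp ((t - s) * (exp r - 1 - r))) := by
  have h := lintegral_exp_mul_sub_of_map_eq_poissonMeasure ((hYmeas t).sub (hYmeas s))
    (hYpoisson s t hs hst) r
  rw [coe_toNNReal _ (sub_nonneg.2 hst)] at h
  rw [← h]
  congr with ω
  rw [Pi.sub_apply, Nat.cast_sub (hYmono ω hs hst)]

theorem measure_exists_le_mul_sub_le (hYmeas : ∀ t : ℝ, Measurable (Y t))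
    (hYmono : ∀ ω : Ω, ∀ ⦃s t : ℝ⦄, 0 ≤ s → s ≤ t → Y s ω ≤ Y t ω)
    (hYindep : ∀ (k : ℕ) (t : Fin (k + 1) → ℝ), Monotone t → t 0 = 0 →
      iIndepFun (fun (i : Fin k) (ω : Ω) => Y (t i.succ) ω - Y (t i.castSucc) ω) P)
    (hYpoisson : ∀ (s t : ℝ), 0 ≤ s → s ≤ t →
      P.map (fun ω => Y t ω - Y s ω) = poissonMeasure (t - s).toNNReal)
    {v : ℕ → ℝ} (hv : Monotone v) (hv0 : v 0 = 0) (k : ℕ) (r b : ℝ) :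
    P {ω | ∃ i ≤ k, b ≤ r * ((Y (v i) ω : ℝ) - Y 0 ω - v i)}
      ≤ ENNReal.ofReal (exp (v k * (exp r - 1 - r) - b)) := by
  have hvnn : ∀ i, 0 ≤ v i := fun i => hv0 ▸ hv (Nat.zero_le i)
  set ξ : ℕ → Ω → ℝ := fun j ω => r * ((Y (v (j + 1)) ω : ℝ) - Y (v j) ω - (v (j + 1) - v j))
  have hsum : ∀ i ω, ∑ j ∈ range i, ξ j ω = r * ((Y (v i) ω : ℝ) - Y 0 ω - v i) := by
    intro i ω
    have := sum_range_sub (fun j => (Y (v j) ω : ℝ) - v j) i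
    simp only [hv0, sub_zero] at this
    rw [← mul_sum, sub_right_comm, ← this]
    exact congrArg _ (sum_congr rfl fun j _ => by ring)
  have hξ : ∀ j, Measurable (ξ j) := fun j => by fun_prop
  have hind : iIndepFun (fun j : Fin k => ξ j) P := by
    have h := (hYindep k (fun i => v i) (fun _ _ h => hv h) hv0).comp
      (fun (j : Fin k) (m : ℕ) => r * ((m : ℝ) - (v (j + 1) - v j))) fun _ => measurable_from_nat
    convert h using 1
    funext j ω
    simp only [ξ, Function.comp_apply, Fin.val_succ, Fin.val_castSucc,
      Nat.cast_sub (hYmono ω (hvnn j) (hv (Nat.le_succ j)))]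
  have hmgf : ∀ j < k, 1 ≤ ∫⁻ ω, ENNReal.ofReal (exp (ξ j ω)) ∂P := fun j _ => by
    rw [lintegral_exp_mul_increment hYmeas hYmono hYpoisson (hvnn j) (hv (Nat.le_succ j)),
      ENNReal.one_le_ofReal]
    exact one_le_exp (mul_nonneg (sub_nonneg.2 (hv (Nat.le_succ j)))
      (by linarith [add_one_le_exp r]))
  have hmax := measure_exists_le_sum_range_le hξ hind hmgf b
  simp only [hsum] at hmax
  have htotal := lintegral_exp_mul_increment hYmeas hYmono hYpoisson le_rfl (hvnn k) r
  rw [sub_zero] at htotal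
  rw [htotal, ← ENNReal.ofReal_mul (exp_pos _).le, ← exp_add] at hmax
  exact hmax.trans_eq (by ring_nf)

theorem measure_exists_le_abs_sub_le (hYmeas : ∀ t : ℝ, Measurable (Y t))
    (hY0 : ∀ᵐ ω ∂P, Y 0 ω = 0)
    (hYmono : ∀ ω : Ω, ∀ ⦃s t : ℝ⦄, 0 ≤ s → s ≤ t → Y s ω ≤ Y t ω)
    (hYindep : ∀ (k : ℕ) (t : Fin (k + 1) → ℝ), Monotone t → t 0 = 0 →
      iIndepFun (fun (i : Fin k) (ω : Ω) => Y (t i.succ) ω - Y (t i.castSucc) ω) P)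
    (hYpoisson : ∀ (s t : ℝ), 0 ≤ s → s ≤ t →
      P.map (fun ω => Y t ω - Y s ω) = poissonMeasure (t - s).toNNReal)
    {v : ℕ → ℝ} (hv : Monotone v) (hv0 : v 0 = 0) (k : ℕ) {θ : ℝ} (hθ0 : 0 ≤ θ) (hθ1 : θ ≤ 1)
    (c : ℝ) :
    P {ω | ∃ i ≤ k, c ≤ |(Y (v i) ω : ℝ) - v i|}
      ≤ ENNReal.ofReal (2 * exp (v k * θ ^ 2 - θ * c)) := by
  set E : ℝ → Set Ω := fun r => {ω | ∃ i ≤ k, θ * c ≤ r * ((Y (v i) ω : ℝ) - Y 0 ω - v i)}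
  have hE : ∀ r, |r| ≤ 1 → r ^ 2 = θ ^ 2 →
      P (E r) ≤ ENNReal.ofReal (exp (v k * θ ^ 2 - θ * c)) := by
    intro r hr1 hr2
    refine (measure_exists_le_mul_sub_le hYmeas hYmono hYindep hYpoisson hv hv0 k r (θ * c)).trans
      (ENNReal.ofReal_le_ofReal (exp_le_exp.2 ?_))
    have hquad := (abs_le.1 (abs_exp_sub_one_sub_id_le hr1)).2
    have hvk : 0 ≤ v k := hv0 ▸ hv (Nat.zero_le k)
    nlinarith
  have hsub : ({ω | ∃ i ≤ k, c ≤ |(Y (v i) ω : ℝ) - v i|} : Set Ω)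
      ≤ᵐ[P] (E θ ∪ E (-θ) : Set Ω) := by
    filter_upwards [hY0] with ω h0 ⟨i, hik, hc⟩
    rcases le_abs'.1 hc with hneg | hpos
    · exact Or.inr ⟨i, hik, by rw [h0, Nat.cast_zero, sub_zero]; nlinarith⟩
    · exact Or.inl ⟨i, hik, by rw [h0, Nat.cast_zero, sub_zero]; nlinarith⟩
  calc P {ω | ∃ i ≤ k, c ≤ |(Y (v i) ω : ℝ) - v i|} ≤ P (E θ ∪ E (-θ)) := measure_mono_ae hsub
    _ ≤ P (E θ) + P (E (-θ)) := measure_union_le _ _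
    _ ≤ ENNReal.ofReal (exp (v k * θ ^ 2 - θ * c)) + ENNReal.ofReal (exp (v k * θ ^ 2 - θ * c)) :=
        add_le_add (hE θ (abs_le.2 ⟨by linarith, hθ1⟩) rfl)
          (hE (-θ) (abs_le.2 ⟨by linarith, by linarith⟩) (neg_sq θ))
    _ = ENNReal.ofReal (2 * exp (v k * θ ^ 2 - θ * c)) := by
        rw [← ENNReal.ofReal_add (exp_pos _).le (exp_pos _).le, two_mul]

theorem measure_lt_iSup_abs_le (hYmeas : ∀ t : ℝ, Measurable (Y t))
    (hY0 : ∀ᵐ ω ∂P, Y 0 ω = 0)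
    (hYmono : ∀ ω : Ω, ∀ ⦃s t : ℝ⦄, 0 ≤ s → s ≤ t → Y s ω ≤ Y t ω)
    (hYrc : ∀ ω : Ω, ∀ t : ℝ, 0 ≤ t → ContinuousWithinAt (fun s => Y s ω) (Set.Ici t) t)
    (hYindep : ∀ (k : ℕ) (t : Fin (k + 1) → ℝ), Monotone t → t 0 = 0 →
      iIndepFun (fun (i : Fin k) (ω : Ω) => Y (t i.succ) ω - Y (t i.castSucc) ω) P)
    (hYpoisson : ∀ (s t : ℝ), 0 ≤ s → s ≤ t →
      P.map (fun ω => Y t ω - Y s ω) = poissonMeasure (t - s).toNNReal)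
    {n : ℕ} (hn : 0 < n) {T y : ℝ} (hT : 0 < T) (hy0 : 0 ≤ y) (hy : y ≤ 2 * √n * T) :
    P {ω | y * √n < ⨆ t : Set.Icc (0 : ℝ) T, |(Y (n * t) ω : ℝ) - n * t|}
      ≤ ENNReal.ofReal (2 * exp (-y ^ 2 / (4 * T))) := by
  have hsn : 0 < √(n : ℝ) := sqrt_pos.2 (Nat.cast_pos.2 hn)
  set v : ℕ → ℕ → ℝ := fun m j => n * (j * T / 2 ^ m)
  set C : ℕ → Set Ω := fun m => {ω | ∃ j ≤ 2 ^ m, y * √n ≤ |(Y (v m j) ω : ℝ) - v m j|}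
  set θ := y / (2 * √n * T)
  have hθ0 : 0 ≤ θ := by positivity
  have hθ1 : θ ≤ 1 := div_le_one_of_le₀ hy (by positivity)
  have hcover : {ω | y * √n < ⨆ t : Set.Icc (0 : ℝ) T, |(Y (n * t) ω : ℝ) - n * t|} ⊆ ⋃ m, C m :=
    fun ω hω =>
      let ⟨m, j, hj, h⟩ := exists_dyadic_lt_of_lt_iSup hT (fun t ht =>
        (hYrc ω _ (mul_nonneg (Nat.cast_nonneg n) ht.1)).abs_natCast_comp_mul_sub
          (Nat.cast_nonneg n)) hω
      Set.mem_iUnion.2 ⟨m, j, hj, h.le⟩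
  have hmono : Monotone C := by
    refine monotone_nat_of_le_succ fun m ω ⟨j, hj, h⟩ => ⟨2 * j, by rw [pow_succ]; omega, ?_⟩
    have hv : v (m + 1) (2 * j) = v m j := by simp only [v]; push_cast; ring
    rwa [hv]
  have hC : ∀ m, P (C m) ≤ ENNReal.ofReal (2 * exp (-y ^ 2 / (4 * T))) := by
    intro m
    have hv : Monotone (v m) := fun i j hij => by simp only [v]; gcongr
    refine (measure_exists_le_abs_sub_le hYmeas hY0 hYmono hYindep hYpoisson hv (by simp [v])
      (2 ^ m) hθ0 hθ1 (y * √n)).trans_eq ?_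
    have hsq : √(n : ℝ) ^ 2 = n := sq_sqrt (Nat.cast_nonneg n)
    congr 3
    simp only [v, θ]
    field_simp
    rw [hsq]
    push_cast
    ring
  calc P {ω | y * √n < ⨆ t : Set.Icc (0 : ℝ) T, |(Y (n * t) ω : ℝ) - n * t|}
      ≤ P (⋃ m, C m) := measure_mono hcover
    _ = ⨆ m, P (C m) := hmono.measure_iUnion
    _ ≤ ENNReal.ofReal (2 * exp (-y ^ 2 / (4 * T))) := iSup_le hC

end CountingProcess

theorem counting_process_sup_tail_bound_general
    {Ω : Type*} [MeasurableSpace Ω] (P : Measure Ω) [IsProbabilityMeasure P]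
    (Y : ℝ → Ω → ℕ)
    (hYmeas : ∀ t : ℝ, Measurable (Y t))
    (hY0 : ∀ᵐ ω ∂P, Y 0 ω = 0)
    (hYmono : ∀ ω : Ω, ∀ ⦃s t : ℝ⦄, 0 ≤ s → s ≤ t → Y s ω ≤ Y t ω)
    (hYrc : ∀ ω : Ω, ∀ t : ℝ, 0 ≤ t →
      ContinuousWithinAt (fun s => Y s ω) (Set.Ici t) t)
    (hYindep : ∀ (k : ℕ) (t : Fin (k + 1) → ℝ), Monotone t → t 0 = 0 →
      iIndepFun
        (fun (i : Fin k) (ω : Ω) => Y (t i.succ) ω - Y (t i.castSucc) ω) P)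
    (hYpoisson : ∀ (s t : ℝ), 0 ≤ s → s ≤ t →
      P.map (fun ω => Y t ω - Y s ω) = poissonMeasure (t - s).toNNReal)
    (n : ℕ) (T : ℝ)
    (x : ℝ) (hx0 : 0 ≤ x) (hx2 : x ≤ 2 * Real.sqrt n * T) :
    P {ω | x * Real.sqrt n ≤
        ⨆ t : Set.Icc (0 : ℝ) T, |(Y (n * t) ω : ℝ) - n * t|} ≤
      ENNReal.ofReal (2 * exp (-x ^ 2 / (4 * T))) := by
  rcases hx0.eq_or_lt with rfl | hx
  · exact prob_le_one.trans (by norm_num)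
  have hT : 0 < T := by nlinarith [sqrt_nonneg (n : ℝ)]
  have hsn : 0 < √(n : ℝ) := by nlinarith [sqrt_nonneg (n : ℝ)]
  have hn : 0 < n := Nat.cast_pos.1 (sqrt_pos.1 hsn)
  have hbound : ∀ y ∈ Set.Ioo 0 x, P {ω | x * √n ≤
      ⨆ t : Set.Icc (0 : ℝ) T, |(Y (n * t) ω : ℝ) - n * t|}
        ≤ ENNReal.ofReal (2 * exp (-y ^ 2 / (4 * T))) := fun y hy =>
    (measure_mono fun ω hω => (mul_lt_mul_of_pos_right hy.2 hsn).trans_le hω).trans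
      (measure_lt_iSup_abs_le hYmeas hY0 hYmono hYrc hYindep hYpoisson hn hT hy.1.le
        (hy.2.le.trans hx2))
  have hcont : Continuous fun y : ℝ => ENNReal.ofReal (2 * exp (-y ^ 2 / (4 * T))) :=
    ENNReal.continuous_ofReal.comp (by fun_prop)
  exact ge_of_tendsto ((hcont.tendsto x).mono_left nhdsWithin_le_nhds)
    (Filter.eventually_of_mem (Ioo_mem_nhdsLT hx) hbound)

/-- Appendix lemma of the paper: if `Y` is a unit-intensity Poisson counting process
(`Y 0 = 0` a.s., nondecreasing right-continuous sample paths, independent Poisson-distributed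
increments), `n ≥ 1`, `T > 0`, and `w t = Y (n t) - n t`, then for every
`0 ≤ x ≤ 2 √n T` one has `ℙ(sup_{t ∈ [0,T]} |w t| ≥ x √n) ≤ 2 exp (-x² / (4 T))`. -/
theorem counting_process_sup_tail_bound
    {Ω : Type*} [MeasurableSpace Ω] (P : Measure Ω) [IsProbabilityMeasure P]
    (Y : ℝ → Ω → ℕ)
    (hYmeas : ∀ t : ℝ, Measurable (Y t))
    (hY0 : ∀ᵐ ω ∂P, Y 0 ω = 0)
    (hYmono : ∀ ω : Ω, ∀ ⦃s t : ℝ⦄, 0 ≤ s → s ≤ t → Y s ω ≤ Y t ω)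
    (hYrc : ∀ ω : Ω, ∀ t : ℝ, 0 ≤ t →
      ContinuousWithinAt (fun s => Y s ω) (Set.Ici t) t)
    (hYindep : ∀ (k : ℕ) (t : Fin (k + 1) → ℝ), Monotone t → t 0 = 0 →
      iIndepFun
        (fun (i : Fin k) (ω : Ω) => Y (t i.succ) ω - Y (t i.castSucc) ω) P)
    (hYpoisson : ∀ (s t : ℝ), 0 ≤ s → s ≤ t →
      P.map (fun ω => Y t ω - Y s ω) = poissonMeasure (t - s).toNNReal)
    (n : ℕ) (hn : 1 ≤ n) (T : ℝ) (hT : 0 < T)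
    (x : ℝ) (hx0 : 0 ≤ x) (hx2 : x ≤ 2 * Real.sqrt n * T) :
    P {ω | x * Real.sqrt n ≤
        ⨆ t : Set.Icc (0 : ℝ) T, |(Y (n * t) ω : ℝ) - n * t|} ≤
      ENNReal.ofReal (2 * exp (-x ^ 2 / (4 * T))) :=
  counting_process_sup_tail_bound_general P Y hYmeas hY0 hYmono hYrc hYindep hYpoisson n T x hx0 hx2
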